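/- Let H be an n×n Hermitian complex matrix and U(t) := exp(itH). Let S_L, S_R : ℝ → M_n(ℂ) be differentiable with S_L(t) and S_R(t) unitary for every t. Define F(t) := S_L(t)* U(t) S_R(t)*, A_L(t) := −i (d/dt S_L(t)*) S_L(t) + (1/2) S_L(t)* H S_L(t), and Ã_R(t) := −i S_R(t) (d/dt S_R(t)*) + (1/2) S_R(t) H S_R(t)*. Then F is differentiable and F′(t) = i A_L(t) F(t) + i F(t) Ã_R(t) for every t ∈ ℝ. -/

import Mathlib

/-!
By the product rule, `F' = (S_Lᴴ)' U S_Rᴴ + S_Lᴴ (i H U) S_Rᴴ + S_Lᴴ U (S_Rᴴ)'`. Unitarity lets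
the outer factors pass through: `(S_Lᴴ)' S_L S_Lᴴ = (S_Lᴴ)'` and `S_Rᴴ S_R (S_Rᴴ)' = (S_Rᴴ)'`,
while the middle term is split into two halves, `S_Lᴴ H S_L · F` and `F · S_R H S_Rᴴ`, the
second using that `U = exp(itH)` commutes with `H`.
-/

open scoped Matrix.Norms.L2Operator
open Matrix

/-- `U t = exp(itH)`. -/
noncomputable def timeEvol {n : ℕ} (H : Matrix (Fin n) (Fin n) ℂ) (t : ℝ) :
    Matrix (Fin n) (Fin n) ℂ :=
  NormedSpace.exp ((Complex.I * (t : ℂ)) • H)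

theorem HasDerivAt.conjTranspose {m : Type*} [Fintype m] [DecidableEq m]
    {f : ℝ → Matrix m m ℂ} {f' : Matrix m m ℂ} {t : ℝ} (hf : HasDerivAt f f' t) :
    HasDerivAt (fun s => (f s)ᴴ) f'ᴴ t :=
  hf.star

theorem timeEvol_eq_exp_smul {n : ℕ} (H : Matrix (Fin n) (Fin n) ℂ) (t : ℝ) :
    timeEvol H t = NormedSpace.exp (t • (Complex.I • H)) := by
  rw [timeEvol, ← smul_assoc, Complex.real_smul, mul_comm]

theorem commute_timeEvol {n : ℕ} (H : Matrix (Fin n) (Fin n) ℂ) (t : ℝ) :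
    Commute H (timeEvol H t) :=
  ((Commute.refl H).smul_right _).exp_right

theorem hasDerivAt_timeEvol {n : ℕ} (H : Matrix (Fin n) (Fin n) ℂ) (t : ℝ) :
    HasDerivAt (timeEvol H) (Complex.I • (H * timeEvol H t)) t := by
  have h := hasDerivAt_exp_smul_const' (𝕂 := ℝ) (Complex.I • H) t
  simp only [← timeEvol_eq_exp_smul] at h
  rwa [smul_mul_assoc] at h

theorem twoSided_deriv_identity {m : Type*} [Fintype m] [DecidableEq m]
    {H U L L' R R' : Matrix m m ℂ}
    (hUH : Commute U H) (hL : L * Lᴴ = 1) (hR : Rᴴ * R = 1) :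
    (L'ᴴ * U + Lᴴ * (Complex.I • (H * U))) * Rᴴ + Lᴴ * U * R'ᴴ =
      Complex.I • ((-Complex.I • (L'ᴴ * L) + (1 / 2 : ℂ) • (Lᴴ * H * L)) * (Lᴴ * U * Rᴴ)) +
        Complex.I • (Lᴴ * U * Rᴴ * (-Complex.I • (R * R'ᴴ) + (1 / 2 : ℂ) • (R * H * Rᴴ))) := by
  have hL' (X : Matrix m m ℂ) : X * L * Lᴴ = X := by rw [mul_assoc, hL, mul_one]
  have hR' (X : Matrix m m ℂ) : X * Rᴴ * R = X := by rw [mul_assoc, hR, mul_one]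
  have hUH' (X : Matrix m m ℂ) : X * U * H = X * H * U := by rw [mul_assoc, hUH.eq, ← mul_assoc]
  simp only [add_mul, mul_add, smul_mul_assoc, mul_smul_comm, smul_add, smul_smul, ← mul_assoc,
    hL', hR', hUH', mul_neg, Complex.I_mul_I, neg_neg, one_smul]
  module

theorem stmt10_general {n : ℕ} (H : Matrix (Fin n) (Fin n) ℂ)
    (SL SL' SR SR' : ℝ → Matrix (Fin n) (Fin n) ℂ)
    (hSL : ∀ t, HasDerivAt SL (SL' t) t)
    (hSR : ∀ t, HasDerivAt SR (SR' t) t)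
    (hSLunit : ∀ t, (SL t)ᴴ * SL t = 1)
    (hSRunit : ∀ t, (SR t)ᴴ * SR t = 1)
    (F AL AR : ℝ → Matrix (Fin n) (Fin n) ℂ)
    (hF : F = fun t => (SL t)ᴴ * timeEvol H t * (SR t)ᴴ)
    (hAL : AL = fun t =>
      (-Complex.I) • ((SL' t)ᴴ * SL t) + (1 / 2 : ℂ) • ((SL t)ᴴ * H * SL t))
    (hAR : AR = fun t =>
      (-Complex.I) • (SR t * (SR' t)ᴴ) + (1 / 2 : ℂ) • (SR t * H * (SR t)ᴴ)) :
    ∀ t : ℝ,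
      HasDerivAt F (Complex.I • (AL t * F t) + Complex.I • (F t * AR t)) t := by
  intro t
  subst hF hAL hAR
  have hSLright : SL t * (SL t)ᴴ = 1 := mul_eq_one_comm.mp (hSLunit t)
  exact ((((hSL t).conjTranspose.mul (hasDerivAt_timeEvol H t)).mul
    (hSR t).conjTranspose).congr_deriv
    (twoSided_deriv_identity (commute_timeEvol H t).symm hSLright (hSRunit t)))

/-- the two-sided error unitary `F(t) = S_L(t)ᴴ U(t) S_R(t)ᴴ`
satisfies `F'(t) = i A_L(t) F(t) + i F(t) Ã_R(t)`. -/
theorem stmt10 {n : ℕ} (H : Matrix (Fin n) (Fin n) ℂ) (hH : Hᴴ = H)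
    (SL SL' SR SR' : ℝ → Matrix (Fin n) (Fin n) ℂ)
    (hSL : ∀ t, HasDerivAt SL (SL' t) t)
    (hSR : ∀ t, HasDerivAt SR (SR' t) t)
    (hSLunit : ∀ t, (SL t)ᴴ * SL t = 1)
    (hSRunit : ∀ t, (SR t)ᴴ * SR t = 1)
    (F AL AR : ℝ → Matrix (Fin n) (Fin n) ℂ)
    (hF : F = fun t => (SL t)ᴴ * timeEvol H t * (SR t)ᴴ)
    (hAL : AL = fun t =>
      (-Complex.I) • ((SL' t)ᴴ * SL t) + (1 / 2 : ℂ) • ((SL t)ᴴ * H * SL t))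
    (hAR : AR = fun t =>
      (-Complex.I) • (SR t * (SR' t)ᴴ) + (1 / 2 : ℂ) • (SR t * H * (SR t)ᴴ)) :
    ∀ t : ℝ,
      HasDerivAt F (Complex.I • (AL t * F t) + Complex.I • (F t * AR t)) t :=
  stmt10_general H SL SL' SR SR' hSL hSR hSLunit hSRunit F AL AR hF hAL hAR
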